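/- Let μ ∈ ℂ, let (φ₋₁, φ₁) be a Casimir representation of semi-level μ on V = ℂ[z]^n, let V' = ℂ[z]^k carry an sl(2)-module structure given by φ'₋₁ ∈ End₋₁(V'), φ'₁ ∈ End₁(V') with φ'₋₁∘φ'₁ − φ'₁∘φ'₋₁ = multiplication by −2z, and let ψ : V' → V be an injective ℂ[z]-linear map with ψ∘φ'₁ = φ₁∘ψ and ψ∘φ'₋₁ = φ₋₁∘ψ. If φ₁ is bijective (i.e. V has Smith type S₀(n,0) = (1,…,1)), then: φ'₁ is bijective (V' has Smith type S₀(k,0)); the quotient Q := V/ψ(V') is a free ℂ[z]-module of rank n−k; the induced maps φ̄₋₁, φ̄₁ on Q form a Casimir representation of semi-level μ; and φ̄₁ is bijective (Q has Smith type S₀(n−k,0)). -/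

import Mathlib

open Polynomial

/-- The shift automorphism `∇ : ℂ[z] → ℂ[z]`, `p(z) ↦ p(z+1)`. -/
noncomputable def nabla : Polynomial ℂ ≃ₐ[ℂ] Polynomial ℂ := algEquivAevalXAddC 1

/-- `End_k(V)`: additive endomorphisms with `φ(p • v) = (∇^k p) • φ(v)`. -/
def IsSemilinearEnd {M : Type*} [AddCommMonoid M] [Module (Polynomial ℂ) M]
    (k : ℤ) (φ : M → M) : Prop :=
  (∀ v w : M, φ (v + w) = φ v + φ w) ∧
  ∀ (p : Polynomial ℂ) (v : M), φ (p • v) = ((nabla ^ k) p) • φ v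

/-- `π_μ(z) = (z+μ)(z-μ-1)`. -/
noncomputable def piMu (μ : ℂ) : Polynomial ℂ := (X + C μ) * (X - C μ - 1)

/-- A Casimir representation of semi-level `μ` on a `ℂ[z]`-module `M`:
a pair `(φ₋₁, φ₁)` of semilinear endomorphisms of degrees `-1` and `1` with
`φ₋₁ ∘ φ₁ = π_μ(z)·` and `φ₁ ∘ φ₋₁ = π_μ(z+1)·`. -/
def IsCasimirRep {M : Type*} [AddCommMonoid M] [Module (Polynomial ℂ) M]
    (μ : ℂ) (φm φp : M → M) : Prop :=
  IsSemilinearEnd (-1) φm ∧ IsSemilinearEnd 1 φp ∧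
  (∀ v, φm (φp v) = piMu μ • v) ∧
  (∀ v, φp (φm v) = (nabla (piMu μ)) • v)

/-! The stable submodule `ψ(V')` lets `φ₋₁, φ₁` descend to `Q = V/ψ(V')`. There `φ̄₁` is
surjective, hence injective as `Q` is Noetherian, and injectivity of `φ̄₁` is exactly what
makes `φ'₁` surjective. The bijective `∇`-semilinear `φ̄₁` makes the annihilator of the
torsion of `Q` a nonzero `∇`-stable ideal of `ℂ[z]`; its generator `g` divides `∇g`, which
has the same degree and leading coefficient, so `∇g = g` and `g` is a nonzero constant.
Thus `Q` is torsion-free, hence free over the PID `ℂ[z]`, of rank `n - k` by rank-nullity. -/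

lemma nabla_apply (p : ℂ[X]) : nabla p = taylor 1 p := by
  simp [nabla, algEquivAevalXAddC, taylor_apply, aeval_def, Polynomial.comp]

lemma natDegree_eq_zero_of_nabla_eq {p : ℂ[X]} (hp : nabla p = p) : p.natDegree = 0 := by
  have hnat : ∀ m : ℕ, p.eval (m : ℂ) = p.eval 0 := by
    intro m
    induction m with
    | zero => simp
    | succ m ih => rw [Nat.cast_succ, ← taylor_eval, ← nabla_apply, hp, ih]
  have hconst : p = C (p.eval 0) := eq_of_infinite_eval_eq p _ <|
    Set.infinite_of_injective_forall_mem Nat.cast_injective (by simpa using hnat)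
  rw [hconst, natDegree_C]

lemma nabla_eq_of_dvd {p : ℂ[X]} (h : p ∣ nabla p) : nabla p = p := by
  rcases eq_or_ne p 0 with rfl | hp
  · exact map_zero nabla
  have hdeg : (nabla p).degree = p.degree := by rw [nabla_apply, degree_taylor]
  have hlc : (nabla p).leadingCoeff = p.leadingCoeff := by
    rw [nabla_apply, leadingCoeff_taylor]
  have hne : nabla p ≠ 0 := by rwa [nabla_apply, Ne, taylor_eq_zero]
  refine sub_eq_zero.mp (eq_zero_of_dvd_of_degree_lt (dvd_sub h dvd_rfl) ?_)
  simpa [hdeg] using degree_sub_lt_left hdeg hne hlc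

lemma Ideal.eq_top_of_nabla_mem {I : Ideal ℂ[X]} (hI : I ≠ ⊥) (h : ∀ p ∈ I, nabla p ∈ I) :
    I = ⊤ := by
  set g := Submodule.IsPrincipal.generator I
  have hg : g ≠ 0 := (Submodule.IsPrincipal.eq_bot_iff_generator_eq_zero I).not.mp hI
  have hgI : g ∈ I := Submodule.IsPrincipal.generator_mem I
  have hfix : nabla g = g :=
    nabla_eq_of_dvd ((Submodule.IsPrincipal.mem_iff_generator_dvd I).mp (h g hgI))
  refine Ideal.eq_top_of_isUnit_mem I hgI (isUnit_iff_degree_eq_zero.mpr ?_)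
  rw [degree_eq_natDegree hg, natDegree_eq_zero_of_nabla_eq hfix, Nat.cast_zero]

theorem IsNoetherian.injective_of_surjective_semilinear {R M : Type*} [Ring R]
    [AddCommGroup M] [Module R M] [IsNoetherian R M] {σ : R →+* R} (f : M →ₛₗ[σ] M)
    (hf : Function.Surjective f) : Function.Injective f := by
  -- `K n` is the kernel of `f^n`.
  let K : ℕ → Submodule R M := fun n => (Submodule.comap f)^[n] ⊥
  have hK : ∀ n, K (n + 1) = (K n).comap f := fun n => Function.iterate_succ_apply' _ _ _
  have hmono : Monotone K := monotone_nat_of_le_succ fun n => by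
    induction n with
    | zero => exact bot_le
    | succ n ih => exact (hK n).trans_le ((Submodule.comap_mono ih).trans_eq (hK (n + 1)).symm)
  obtain ⟨N, hN⟩ := monotone_stabilizes_iff_noetherian.mpr ‹_› ⟨K, hmono⟩
  have hstep : ∀ n, K (n + 2) = K (n + 1) → K (n + 1) = K n := by
    refine fun n h => le_antisymm (fun x hx => ?_) (hmono n.le_succ)
    obtain ⟨y, rfl⟩ := hf x
    have hy : y ∈ K (n + 2) := by rw [hK]; exact hx
    rw [h, hK] at hy
    exact hy
  have hdescend : ∀ j, K (j + 1) = K j → K 1 = K 0 := by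
    intro j
    induction j with
    | zero => exact id
    | succ j ih => exact fun h => ih (hstep j h)
  have hker : LinearMap.ker f = ⊥ := by
    rw [← Submodule.comap_bot]
    exact hdescend N (hN (N + 1) N.le_succ).symm
  exact LinearMap.ker_eq_bot.mp hker

lemma annihilator_torsion_ne_bot {R M : Type*} [CommRing R] [Nontrivial R] [AddCommGroup M]
    [Module R M] [IsNoetherian R M] : (Submodule.torsion R M).annihilator ≠ ⊥ := by
  obtain ⟨a, ha, ha0⟩ :=
    Submodule.annihilator_top_inter_nonZeroDivisors (Submodule.torsion_isTorsion (R := R) (M := M))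
  rw [Submodule.annihilator_top] at ha
  exact (Submodule.ne_bot_iff _).mpr ⟨a, ha, nonZeroDivisors.ne_zero ha0⟩

lemma map_mem_annihilator_torsion {R M : Type*} [CommRing R] [AddCommGroup M] [Module R M]
    (σ : R ≃+* R) (f : M →ₛₗ[(σ : R →+* R)] M) (hf : Function.Bijective f) {p : R}
    (hp : p ∈ (Submodule.torsion R M).annihilator) :
    σ p ∈ (Submodule.torsion R M).annihilator := by
  rw [Submodule.mem_annihilator] at hp ⊢
  intro t ht
  obtain ⟨s, rfl⟩ := hf.2 t
  obtain ⟨a, ha⟩ := Submodule.mem_torsion_iff _ |>.mp ht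
  have hs : s ∈ Submodule.torsion R M := by
    refine Submodule.mem_torsion_iff _ |>.mpr
      ⟨⟨σ.symm a, mem_nonZeroDivisors_of_injective σ.injective (by simp)⟩, hf.1 ?_⟩
    rw [Submonoid.smul_def, LinearMap.map_smulₛₗ, map_zero]
    simpa [Submonoid.smul_def] using ha
  calc σ p • f s = f (p • s) := (f.map_smulₛₗ p s).symm
    _ = 0 := by rw [hp s hs, map_zero]

lemma Function.Semiconj.bijective_of_preimage_range_subset {α β : Type*} {ψ : α → β}
    {f' : α → α} {f : β → β} (h : Function.Semiconj ψ f' f) (hψ : Function.Injective ψ)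
    (hf : Function.Bijective f) (hrange : ∀ v, f v ∈ Set.range ψ → v ∈ Set.range ψ) :
    Function.Bijective f' := by
  refine ⟨fun a b hab => hψ (hf.1 ?_), fun w => ?_⟩
  · rw [← h, ← h, hab]
  · obtain ⟨v, hv⟩ := hf.2 (ψ w)
    obtain ⟨u, rfl⟩ := hrange v ⟨w, hv.symm⟩
    exact ⟨u, hψ (by rw [h, hv])⟩

lemma Module.Basis.existsUnique_eq_sum_smul {ι R M : Type*} [Fintype ι] [Semiring R]
    [AddCommMonoid M] [Module R M] (b : Module.Basis ι R M) (v : M) :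
    ∃! c : ι → R, v = ∑ i, c i • b i := by
  refine ⟨b.repr v, (b.sum_repr v).symm, fun c hc => ?_⟩
  rw [hc, b.repr_sum_self]

namespace IsSemilinearEnd

variable {M : Type*} [AddCommGroup M] [Module ℂ[X] M] {k : ℤ} {f : M → M}

noncomputable def toSemilinearMap (hf : IsSemilinearEnd k f) :
    M →ₛₗ[((nabla ^ k).toRingEquiv : ℂ[X] →+* ℂ[X])] M where
  toFun := f
  map_add' := hf.1
  map_smul' := hf.2

lemma of_semilinearMap (g : M →ₛₗ[((nabla ^ k).toRingEquiv : ℂ[X] →+* ℂ[X])] M) :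
    IsSemilinearEnd k g :=
  ⟨g.map_add, g.map_smulₛₗ⟩

lemma torsion_eq_bot [IsNoetherian ℂ[X] M] (hf : IsSemilinearEnd 1 f)
    (hbij : Function.Bijective f) : Submodule.torsion ℂ[X] M = ⊥ := by
  refine Submodule.annihilator_eq_top_iff.mp <|
    Ideal.eq_top_of_nabla_mem annihilator_torsion_ne_bot fun p hp => ?_
  simpa using map_mem_annihilator_torsion _ hf.toSemilinearMap hbij hp

variable (W : Submodule ℂ[X] M)

noncomputable def quotientMap (hf : IsSemilinearEnd k f) (hW : ∀ x ∈ W, f x ∈ W) :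
    M ⧸ W →ₛₗ[((nabla ^ k).toRingEquiv : ℂ[X] →+* ℂ[X])] M ⧸ W :=
  W.mapQ W hf.toSemilinearMap hW

@[simp]
lemma quotientMap_mk (hf : IsSemilinearEnd k f) (hW : ∀ x ∈ W, f x ∈ W) (v : M) :
    hf.quotientMap W hW (Submodule.Quotient.mk v) = Submodule.Quotient.mk (f v) :=
  rfl

lemma quotientMap_surjective (hf : IsSemilinearEnd k f) (hW : ∀ x ∈ W, f x ∈ W)
    (hsurj : Function.Surjective f) : Function.Surjective (hf.quotientMap W hW) := by
  intro q
  obtain ⟨v, rfl⟩ := Submodule.Quotient.mk_surjective W q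
  obtain ⟨u, rfl⟩ := hsurj v
  exact ⟨Submodule.Quotient.mk u, rfl⟩

end IsSemilinearEnd

lemma IsCasimirRep.quotient {M : Type*} [AddCommGroup M] [Module ℂ[X] M] {μ : ℂ}
    {φm φp : M → M} (h : IsCasimirRep μ φm φp) (W : Submodule ℂ[X] M)
    (hWm : ∀ x ∈ W, φm x ∈ W) (hWp : ∀ x ∈ W, φp x ∈ W) :
    IsCasimirRep μ (h.1.quotientMap W hWm) (h.2.1.quotientMap W hWp) := by
  have hmk := Submodule.Quotient.mk_surjective W
  refine ⟨.of_semilinearMap _, .of_semilinearMap _, hmk.forall.mpr fun v => ?_,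
    hmk.forall.mpr fun v => ?_⟩
  · simp only [IsSemilinearEnd.quotientMap_mk, h.2.2.1, Submodule.Quotient.mk_smul]
  · simp only [IsSemilinearEnd.quotientMap_mk, h.2.2.2, Submodule.Quotient.mk_smul]

theorem stmt_18_general (μ : ℂ) (n k : ℕ)
    (φm φp : (Fin n → Polynomial ℂ) → (Fin n → Polynomial ℂ))
    (h : IsCasimirRep μ φm φp)
    (φm' φp' : (Fin k → Polynomial ℂ) → (Fin k → Polynomial ℂ))
    (ψ : (Fin k → Polynomial ℂ) →ₗ[Polynomial ℂ] (Fin n → Polynomial ℂ))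
    (hinj : Function.Injective ψ)
    (hintp : ∀ v, ψ (φp' v) = φp (ψ v))
    (hintm : ∀ v, ψ (φm' v) = φm (ψ v))
    (hbij : Function.Bijective φp) :
    Function.Bijective φp' ∧
    (∃ b : Fin (n - k) → (Fin n → Polynomial ℂ) ⧸ LinearMap.range ψ,
      ∀ v : (Fin n → Polynomial ℂ) ⧸ LinearMap.range ψ,
        ∃! c : Fin (n - k) → Polynomial ℂ, v = ∑ i, c i • b i) ∧
    (∃ ψm ψp : ((Fin n → Polynomial ℂ) ⧸ LinearMap.range ψ) →
        ((Fin n → Polynomial ℂ) ⧸ LinearMap.range ψ),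
      (∀ v : Fin n → Polynomial ℂ,
        ψm (Submodule.Quotient.mk v) = Submodule.Quotient.mk (φm v)) ∧
      (∀ v : Fin n → Polynomial ℂ,
        ψp (Submodule.Quotient.mk v) = Submodule.Quotient.mk (φp v)) ∧
      IsCasimirRep μ ψm ψp ∧ Function.Bijective ψp) := by
  set W := LinearMap.range ψ
  have hWm : ∀ x ∈ W, φm x ∈ W := by rintro _ ⟨u, rfl⟩; exact ⟨φm' u, hintm u⟩
  have hWp : ∀ x ∈ W, φp x ∈ W := by rintro _ ⟨u, rfl⟩; exact ⟨φp' u, hintp u⟩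
  have hQ := h.quotient W hWm hWp
  set φpQ := h.2.1.quotientMap W hWp
  have hsurjQ : Function.Surjective φpQ := h.2.1.quotientMap_surjective W hWp hbij.2
  have hbijQ : Function.Bijective φpQ :=
    ⟨IsNoetherian.injective_of_surjective_semilinear φpQ hsurjQ, hsurjQ⟩
  have hpreimage : ∀ v, φp v ∈ W → v ∈ W := fun v hv => by
    rw [← Submodule.Quotient.mk_eq_zero] at hv ⊢
    exact hbijQ.1 (by rw [IsSemilinearEnd.quotientMap_mk, hv, map_zero])
  have : Module.IsTorsionFree ℂ[X] ((Fin n → ℂ[X]) ⧸ W) :=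
    Submodule.isTorsionFree_iff_torsion_eq_bot.mpr
      (hQ.2.1.torsion_eq_bot hbijQ)
  have hrank : Module.finrank ℂ[X] ((Fin n → ℂ[X]) ⧸ W) = n - k := by
    rw [Submodule.finrank_quotient, LinearMap.finrank_range_of_inj hinj, Module.finrank_fin_fun,
      Module.finrank_fin_fun]
  refine ⟨Function.Semiconj.bijective_of_preimage_range_subset hintp hinj hbij hpreimage,
    ⟨_, (Module.finBasisOfFinrankEq _ _ hrank).existsUnique_eq_sum_smul⟩,
    _, _, fun _ => rfl, fun _ => rfl, hQ, hbijQ⟩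

/-- let `(φ₋₁, φ₁)` be a Casimir representation of semi-level `μ` on
`V = ℂ[z]^n`, `(φ'₋₁, φ'₁)` an `sl(2)`-module structure on `V' = ℂ[z]^k` and
`ψ : V' → V` an injective morphism of `sl(2)`-modules. If `φ₁` is bijective (Smith type
`S₀(n,0)`), then `φ'₁` is bijective (Smith type `S₀(k,0)`), the quotient `Q = V/ψ(V')` is a
free `ℂ[z]`-module of rank `n−k`, and the induced maps on `Q` form a Casimir representation
of semi-level `μ` whose `φ̄₁` is bijective (Smith type `S₀(n−k,0)`). -/
theorem stmt_18 (μ : ℂ) (n k : ℕ)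
    (φm φp : (Fin n → Polynomial ℂ) → (Fin n → Polynomial ℂ))
    (h : IsCasimirRep μ φm φp)
    (φm' φp' : (Fin k → Polynomial ℂ) → (Fin k → Polynomial ℂ))
    (hm' : IsSemilinearEnd (-1) φm') (hp' : IsSemilinearEnd 1 φp')
    (hcomm' : ∀ v : Fin k → Polynomial ℂ,
      φm' (φp' v) - φp' (φm' v) = ((-2 : Polynomial ℂ) * X) • v)
    (ψ : (Fin k → Polynomial ℂ) →ₗ[Polynomial ℂ] (Fin n → Polynomial ℂ))
    (hinj : Function.Injective ψ)
    (hintp : ∀ v, ψ (φp' v) = φp (ψ v))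
    (hintm : ∀ v, ψ (φm' v) = φm (ψ v))
    (hbij : Function.Bijective φp) :
    Function.Bijective φp' ∧
    (∃ b : Fin (n - k) → (Fin n → Polynomial ℂ) ⧸ LinearMap.range ψ,
      ∀ v : (Fin n → Polynomial ℂ) ⧸ LinearMap.range ψ,
        ∃! c : Fin (n - k) → Polynomial ℂ, v = ∑ i, c i • b i) ∧
    (∃ ψm ψp : ((Fin n → Polynomial ℂ) ⧸ LinearMap.range ψ) →
        ((Fin n → Polynomial ℂ) ⧸ LinearMap.range ψ),
      (∀ v : Fin n → Polynomial ℂ,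
        ψm (Submodule.Quotient.mk v) = Submodule.Quotient.mk (φm v)) ∧
      (∀ v : Fin n → Polynomial ℂ,
        ψp (Submodule.Quotient.mk v) = Submodule.Quotient.mk (φp v)) ∧
      IsCasimirRep μ ψm ψp ∧ Function.Bijective ψp) :=
  stmt_18_general μ n k φm φp h φm' φp' ψ hinj hintp hintm hbij
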